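/- arXiv:1609.00927 — 2 statements merged into one kernel-verified Lean document; each statement's English description precedes it below -/
import Mathlib

section
/- Let ε > 0, y ∈ ℝⁿ, A ⊂ ℝⁿ measurable, and let g : A → ℝ be measurable with 0 ≤ g(x) ≤ min{(a|x-y|)², b²} for every x ∈ A, for some constants a, b ≥ 0. Then ∫_A J_ε(x-y) g(x) dx ≤ M_J (max{ε a, b})². -/
open MeasureTheory Metric Set Filter Topology Classical
open scoped RealInnerProductSpace NNReal ENNReal

noncomputable section
set_option autoImplicit false
set_option linter.unusedVariables false

/-- Euclidean space `ℝⁿ`. -/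
abbrev En (n : ℕ) : Type := EuclideanSpace ℝ (Fin n)

variable {n : ℕ}

/-- The rescaled kernel `J_ε(x) := ε⁻ⁿ J(x/ε)`. -/
def Jeps (J : En n → ℝ) (ε : ℝ) (x : En n) : ℝ := (1 / ε ^ n) * J (ε⁻¹ • x)

/-- Hypothesis (J1): `J` is an even nonnegative measurable kernel with
`∫ J(x) min{|x|,|x|²} dx < ∞`. -/
def J1cond (J : En n → ℝ) : Prop :=
  Measurable J ∧ (∀ x, 0 ≤ J x) ∧ (∀ x, J (-x) = J x) ∧
    (∫⁻ x, ENNReal.ofReal (J x * min ‖x‖ (‖x‖ ^ 2))) < ⊤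

/-- Hypothesis (J2) (non-degeneracy), with the constants `γJ, δJ, cJ` and the
functions `ξ ↦ α(ξ), β(ξ)` made explicit. -/
def J2cond (J : En n → ℝ) (γJ δJ cJ : ℝ) (α β : En n → ℝ) : Prop :=
  0 < γJ ∧ δJ ∈ Ioo (0:ℝ) 1 ∧ 0 < cJ ∧
  ∀ ξ : En n, ‖ξ‖ = 1 →
    -γJ ≤ α ξ ∧ α ξ + δJ ≤ β ξ ∧ β ξ ≤ γJ ∧
    (∫ t in (α ξ)..(β ξ), 1 / (J (t • ξ) * |t| ^ (n - 1))) ≤ cJ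

/-- Hypothesis (J2), existential form. -/
def J2condEx (J : En n → ℝ) : Prop :=
  ∃ γJ δJ cJ : ℝ, ∃ α β : En n → ℝ, J2cond J γJ δJ cJ α β

/-- Hypotheses (W1)–(W3b) on the double-well potential `W`. -/
def Wcond (W : ℝ → ℝ) (cW aW : ℝ) : Prop :=
  Continuous W ∧ (∀ s, 0 ≤ W s) ∧ (∀ s : ℝ, W s = 0 ↔ s = -1 ∨ s = 1) ∧
  0 < cW ∧ (∀ s : ℝ, (|s| - 1) ^ 2 ≤ cW * W s) ∧
  aW ∈ Ioo (0:ℝ) 1 ∧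
  MonotoneOn W (Ici (1:ℝ)) ∧ MonotoneOn W (Icc (-1:ℝ) (-1 + aW)) ∧
  AntitoneOn W (Iic (-1:ℝ)) ∧ AntitoneOn W (Icc (1 - aW) (1:ℝ))

/-- `u ∈ W^{1,2}_loc(A)` (intersected with `L²_loc`): `u` is a.e. differentiable on `A`
and `u`, `∇u` are square integrable on every compact subset of `A`. -/
def MemW12loc (u : En n → ℝ) (A : Set (En n)) : Prop :=
  (∀ᵐ x ∂(volume.restrict A), DifferentiableAt ℝ u x) ∧
  ∀ K : Set (En n), K ⊆ A → IsCompact K →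
    MemLp u 2 (volume.restrict K) ∧ MemLp (fun x => fderiv ℝ u x) 2 (volume.restrict K)

/-- `u ∈ W^{1,2}(A)`. -/
def MemW12 (u : En n → ℝ) (A : Set (En n)) : Prop :=
  (∀ᵐ x ∂(volume.restrict A), DifferentiableAt ℝ u x) ∧
  MemLp u 2 (volume.restrict A) ∧ MemLp (fun x => fderiv ℝ u x) 2 (volume.restrict A)

/-- The (localized) potential term `W_ε(u, A) = (1/ε) ∫_A W(u) dx`, with values in `[0,∞]`. -/
def energyW (W : ℝ → ℝ) (ε : ℝ) (u : En n → ℝ) (A : Set (En n)) : ℝ≥0∞ :=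
  ENNReal.ofReal (1 / ε) * ∫⁻ x in A, ENNReal.ofReal (W (u x))

/-- The (localized) nonlocal term
`J_ε(u, A, B) = ε ∫_A ∫_B J_ε(x-y) |∇u(x) - ∇u(y)|² dx dy`, with values in `[0,∞]`. -/
def energyJ (J : En n → ℝ) (ε : ℝ) (u : En n → ℝ) (A B : Set (En n)) : ℝ≥0∞ :=
  ENNReal.ofReal ε *
    ∫⁻ y in A, ∫⁻ x in B,
      ENNReal.ofReal (Jeps J ε (x - y)) * ENNReal.ofReal (‖fderiv ℝ u x - fderiv ℝ u y‖ ^ 2)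

/-- The full (localized) energy `F_ε(u, A) = W_ε(u, A) + J_ε(u, A, A)`. -/
def energyF (W : ℝ → ℝ) (J : En n → ℝ) (ε : ℝ) (u : En n → ℝ) (A : Set (En n)) : ℝ≥0∞ :=
  energyW W ε u A + energyJ J ε u A A

/-- The functional `F_ε` on `L²(Ω)`, extended by `+∞` outside `W^{1,2}_loc(Ω)`. -/
def FepsExt (W : ℝ → ℝ) (J : En n → ℝ) (Ω : Set (En n)) (ε : ℝ) (u : En n → ℝ) : ℝ≥0∞ :=
  if MemW12loc u Ω then energyF W J ε u Ω else ⊤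

/-- Convergence in `L²(A)` of a sequence of functions. -/
def L2Tendsto (A : Set (En n)) (u : ℕ → En n → ℝ) (v : En n → ℝ) : Prop :=
  Tendsto (fun j => eLpNorm (fun x => u j x - v x) 2 (volume.restrict A)) atTop (𝓝 0)

/-- Convergence in `L²(A)`, `A ⊆ ℝ`. -/
def L2TendstoR (A : Set ℝ) (u : ℕ → ℝ → ℝ) (v : ℝ → ℝ) : Prop :=
  Tendsto (fun j => eLpNorm (fun t => u j t - v t) 2 (volume.restrict A)) atTop (𝓝 0)

/-- The divergence of a vector field on `ℝⁿ`. -/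
def divg (φ : En n → En n) (x : En n) : ℝ :=
  ∑ i : Fin n, fderiv ℝ φ x (EuclideanSpace.single i 1) i

/-- `u` has bounded variation on `Ω`: the distributional gradient of `u` is a bounded
(vector) measure, expressed via integration by parts against smooth vector fields. -/
def BVOn (u : En n → ℝ) (Ω : Set (En n)) : Prop :=
  ∃ C : ℝ, ∀ φ : En n → En n, ContDiff ℝ (⊤ : ℕ∞) φ → HasCompactSupport φ →
    tsupport φ ⊆ Ω → (∀ x, ‖φ x‖ ≤ 1) →
    (∫ x in Ω, u x * divg φ x) ≤ C

/-- `u ∈ BV(Ω; {-1,1})`. -/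
def BVpm (u : En n → ℝ) (Ω : Set (En n)) : Prop :=
  (∀ᵐ x ∂(volume.restrict Ω), u x = 1 ∨ u x = -1) ∧ BVOn u Ω

/-- `x` is an approximate jump point of the `{±1}`-valued function `u` with
approximate (inner) normal `ν`. -/
def jumpPtAt (u : En n → ℝ) (x ν : En n) : Prop :=
  ‖ν‖ = 1 ∧
  Tendsto (fun r : ℝ =>
      (∫ y in {y ∈ ball x r | 0 < ⟪y - x, ν⟫}, |u y - 1|) / r ^ n) (𝓝[>] 0) (𝓝 0) ∧
  Tendsto (fun r : ℝ =>
      (∫ y in {y ∈ ball x r | ⟪y - x, ν⟫ < 0}, |u y + 1|) / r ^ n) (𝓝[>] 0) (𝓝 0)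

/-- The jump set `S_u` of a `{±1}`-valued function. -/
def jumpSet (u : En n → ℝ) : Set (En n) := {x | ∃ ν, jumpPtAt u x ν}

/-- The approximate normal `ν_u(x)` at a jump point. -/
def jumpNormal (u : En n → ℝ) (x : En n) : En n :=
  if h : ∃ ν, jumpPtAt u x ν then h.choose else 0

/-- The "cube" `Q_ρ^ν = {x : |x·ν_i| < ρ/2, i = 1,…,n}` relative to the orthonormal
frame `b`. -/
def QsetR (b : Fin n → En n) (ρ : ℝ) : Set (En n) := {x | ∀ i : Fin n, |⟪x, b i⟫| < ρ / 2}

/-- The unit cube `Q^ν`. -/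
def Qset (b : Fin n → En n) : Set (En n) := QsetR b 1

/-- The infinite slab `V^ν = {x : |x·ν_i| < 1/2, i = 1,…,n-1}`. -/
def Vset (b : Fin n → En n) : Set (En n) :=
  {x | ∀ i : Fin n, (i : ℕ) < n - 1 → |⟪x, b i⟫| < 1 / 2}

/-- `b` is an orthonormal basis `ν₁, …, ν_n` with `ν_n = ν`. -/
def goodBasis (ν : En n) (b : Fin n → En n) : Prop :=
  Orthonormal ℝ b ∧ ∀ h : n - 1 < n, b ⟨n - 1, h⟩ = ν

/-- `v ∈ X^ν`: `v ∈ W^{1,2}_loc(ℝⁿ)`, periodic in the directions `ν₁, …, ν_{n-1}`,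
with `v = ±1` a.e. on `{± x·ν ≥ 1/2}`. -/
def memX (ν : En n) (b : Fin n → En n) (v : En n → ℝ) : Prop :=
  MemW12loc v univ ∧
  (∀ i : Fin n, (i : ℕ) < n - 1 → ∀ᵐ x ∂(volume : Measure (En n)), v (x + b i) = v x) ∧
  (∀ᵐ x ∂(volume : Measure (En n)),
    (1 / 2 ≤ ⟪x, ν⟫ → v x = 1) ∧ (⟪x, ν⟫ ≤ -(1 / 2) → v x = -1))

/-- The anisotropic surface energy density `ψ(ν)`. -/
def psi (W : ℝ → ℝ) (J : En n → ℝ) (ν : En n) : ℝ≥0∞ :=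
  ⨅ (b : Fin n → En n) (_ : goodBasis ν b) (ε : ℝ) (_ : ε ∈ Ioo (0:ℝ) 1)
    (v : En n → ℝ) (_ : memX ν b v),
    energyW W ε v (Qset b) + energyJ J ε v (Vset b) univ

/-- The limit surface energy `∫_{S_u} ψ(ν_u) dH^{n-1}` (over the part of `S_u` inside `Ω`). -/
def surfE (W : ℝ → ℝ) (J : En n → ℝ) (u : En n → ℝ) (Ω : Set (En n)) : ℝ≥0∞ :=
  ∫⁻ x in Ω ∩ jumpSet u, psi W J (jumpNormal u x) ∂(μH[(n:ℝ) - 1])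

/-- The candidate `Γ`-limit functional on `L²(Ω)`. -/
def Glim (W : ℝ → ℝ) (J : En n → ℝ) (Ω : Set (En n)) (u : En n → ℝ) : ℝ≥0∞ :=
  if BVpm u Ω then surfE W J u Ω else ⊤

/-- `Ω` has Lipschitz boundary: near every boundary point, `Ω` is the open
hypograph of a Lipschitz function in a suitable direction. -/
def HasLipBoundary (Ω : Set (En n)) : Prop :=
  ∀ x ∈ frontier Ω, ∃ ν : En n, ‖ν‖ = 1 ∧ ∃ r : ℝ, 0 < r ∧ ∃ K : ℝ≥0,
    ∃ g : ((ℝ ∙ ν)ᗮ : Submodule ℝ (En n)) → ℝ, LipschitzWith K g ∧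
      Ω ∩ ball x r = {y ∈ ball x r | g (Submodule.orthogonalProjectionOnto (ℝ ∙ ν)ᗮ (y - x)) < ⟪y - x, ν⟫}

/-- The one-dimensional kernel `J^ξ(t) = J(tξ)|t|^{n-1}`. -/
def Jxi (J : En n → ℝ) (ξ : En n) (t : ℝ) : ℝ := J (t • ξ) * |t| ^ (n - 1)

/-- Its rescaling `J_ε^ξ(t) = (1/ε) J^ξ(t/ε)`. -/
def JxiEps (J : En n → ℝ) (ξ : En n) (ε t : ℝ) : ℝ := (1 / ε) * Jxi J ξ (t / ε)

/-- `σ_{n-1} = H^{n-1}(S^{n-1})`. -/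
def sigmaSphere (n : ℕ) : ℝ := (μH[(n:ℝ) - 1] {x : En n | ‖x‖ = 1}).toReal

/-- `u ∈ W^{1,2}_loc(A) ∩ L²_loc(A)` for `A ⊆ ℝ`. -/
def MemW12locR (u : ℝ → ℝ) (A : Set ℝ) : Prop :=
  (∀ᵐ t ∂(volume.restrict A), DifferentiableAt ℝ u t) ∧
  ∀ K : Set ℝ, K ⊆ A → IsCompact K →
    MemLp u 2 (volume.restrict K) ∧ MemLp (deriv u) 2 (volume.restrict K)

/-- The one-dimensional sliced potential term. -/
def energyWxi (W : ℝ → ℝ) (n : ℕ) (ε : ℝ) (v : ℝ → ℝ) (A : Set ℝ) : ℝ≥0∞ :=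
  ENNReal.ofReal (1 / (sigmaSphere n * ε)) * ∫⁻ t in A, ENNReal.ofReal (W (v t))

/-- The one-dimensional sliced nonlocal term. -/
def energyJxi (J : En n → ℝ) (ξ : En n) (ε : ℝ) (v : ℝ → ℝ) (A : Set ℝ) : ℝ≥0∞ :=
  ENNReal.ofReal (ε / 2) *
    ∫⁻ t in A, ∫⁻ s in A,
      ENNReal.ofReal (JxiEps J ξ ε (s - t)) * ENNReal.ofReal ((deriv v s - deriv v t) ^ 2)

/-- The sliced energy `F_ε^ξ(v, A)`. -/
def energyFxi (W : ℝ → ℝ) (J : En n → ℝ) (ξ : En n) (ε : ℝ) (v : ℝ → ℝ) (A : Set ℝ) :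
    ℝ≥0∞ :=
  energyWxi W n ε v A + energyJxi J ξ ε v A

/-- `ω₁(t) = 2 ∫_{ℝⁿ \ B_{1/t}(0)} J(z)|z| dz`. -/
def omega1 (J : En n → ℝ) (t : ℝ) : ℝ := 2 * ∫ z in {z : En n | 1 / t ≤ ‖z‖}, J z * ‖z‖

/-- The function `w^ν` jumping from `-1` to `1` across the hyperplane `{x·ν = 0}`. -/
def wnu (ν : En n) (x : En n) : ℝ := if 0 < ⟪x, ν⟫ then 1 else -1

/-- `θ` is a mollifier supported in the unit ball. -/
def IsMollifier (θ : En n → ℝ) : Prop :=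
  ContDiff ℝ (⊤ : ℕ∞) θ ∧ HasCompactSupport θ ∧ tsupport θ ⊆ ball 0 1 ∧ (∫ x, θ x) = 1

/-- The mollification `f ∗ θ_σ`. -/
def mollify (f θ : En n → ℝ) (σ : ℝ) (x : En n) : ℝ :=
  ∫ y, (1 / σ ^ n) * θ (σ⁻¹ • y) * f (x - y)

/-- `P` is a bounded polyhedron of dimension `n-1` with normal `ν`, lying in the
hyperplane `{x·ν = c}`. -/
def IsPolyhedron (P : Set (En n)) (ν : En n) (c : ℝ) : Prop :=
  Bornology.IsBounded P ∧
  (∃ k : ℕ, ∃ w : Fin k → En n, ∃ d : Fin k → ℝ,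
    P = {x | ⟪x, ν⟫ = c} ∩ ⋂ i, {x | ⟪x, w i⟫ ≤ d i}) ∧
  ∃ x₀ ∈ P, ∃ r : ℝ, 0 < r ∧ {y | ⟪y, ν⟫ = c} ∩ ball x₀ r ⊆ P

/-- The prism `P_ρ = {x + tν : x ∈ P, t ∈ (-ρ/2, ρ/2)}`. -/
def prism (P : Set (En n)) (ν : En n) (ρ : ℝ) : Set (En n) :=
  {z | ∃ x ∈ P, ∃ t ∈ Ioo (-(ρ / 2)) (ρ / 2), z = x + t • ν}

/-- `(A)_η = {x ∈ A : dist(x, ∂A) > η}`. -/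
def innerSet (A : Set (En n)) (η : ℝ) : Set (En n) :=
  {x ∈ A | η < infDist x (frontier A)}

/-- `Σ` is a bounded polyhedral set of dimension `n-1`. -/
def polySurface (Sig : Set (En n)) : Prop :=
  ∃ k : ℕ, ∃ P : Fin k → Set (En n), ∃ ν : Fin k → En n, ∃ c : Fin k → ℝ,
    Sig = ⋃ i, P i ∧ ∀ i, ‖ν i‖ = 1 ∧ IsPolyhedron (P i) (ν i) (c i)
/-- **Lemma 5.3.** If `0 ≤ g(x) ≤ min{(a|x-y|)², b²}` on `A`, then
`∫_A J_ε(x-y) g(x) dx ≤ M_J (max{εa, b})²`. -/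
theorem kernel_estimate (n : ℕ)
    (J : En n → ℝ) (hJm : Measurable J) (hJ0 : ∀ x, 0 ≤ J x) (hJe : ∀ x, J (-x) = J x)
    (hJ1 : Integrable (fun x : En n => J x * min ‖x‖ (‖x‖ ^ 2)))
    (ε : ℝ) (hε : 0 < ε) (y : En n) (A : Set (En n)) (hA : MeasurableSet A)
    (g : En n → ℝ) (hgm : Measurable g) (a b : ℝ) (ha : 0 ≤ a) (hb : 0 ≤ b)
    (hg : ∀ x ∈ A, 0 ≤ g x ∧ g x ≤ min ((a * ‖x - y‖) ^ 2) (b ^ 2)) :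
    (∫⁻ x in A, ENNReal.ofReal (Jeps J ε (x - y) * g x)) ≤
      ENNReal.ofReal ((∫ x, J x * min ‖x‖ (‖x‖ ^ 2)) * max (ε * a) b ^ 2) := by
  set M : ℝ := max (ε * a) b with hM
  have hM0 : 0 ≤ M := le_max_of_le_right hb
  have hεn : (0:ℝ) < ε ^ n := pow_pos hε n
  -- the dominating function
  set h : En n → ℝ := fun x =>
    (1 / ε ^ n) * (J (ε⁻¹ • (x - y)) * min ‖ε⁻¹ • (x - y)‖ (‖ε⁻¹ • (x - y)‖ ^ 2) * M ^ 2)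
    with hh
  -- pointwise bound on A
  have hpt : ∀ x ∈ A, Jeps J ε (x - y) * g x ≤ h x := by
    intro x hx
    obtain ⟨hg0, hgle⟩ := hg x hx
    set u : En n := ε⁻¹ • (x - y) with hu
    have hnorm : ‖x - y‖ = ε * ‖u‖ := by
      rw [hu, norm_smul, norm_inv, Real.norm_eq_abs, abs_of_pos hε]
      field_simp
    have hmin : min ((a * ‖x - y‖) ^ 2) (b ^ 2) ≤ M ^ 2 * min ‖u‖ (‖u‖ ^ 2) := by
      have hun : (0:ℝ) ≤ ‖u‖ := norm_nonneg _
      rcases le_total ‖u‖ 1 with h1 | h1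
      · have : min ‖u‖ (‖u‖ ^ 2) = ‖u‖ ^ 2 := min_eq_right (by nlinarith)
        rw [this]
        refine le_trans (min_le_left _ _) ?_
        have hεa : ε * a ≤ M := le_max_left _ _
        have : (a * ‖x - y‖) ^ 2 = (ε * a) ^ 2 * ‖u‖ ^ 2 := by rw [hnorm]; ring
        rw [this]
        have : (ε * a) ^ 2 ≤ M ^ 2 := by nlinarith [mul_nonneg hε.le ha]
        nlinarith
      · have : min ‖u‖ (‖u‖ ^ 2) = ‖u‖ := min_eq_left (by nlinarith)
        rw [this]
        refine le_trans (min_le_right _ _) ?_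
        have hbM : b ≤ M := le_max_right _ _
        nlinarith
    have hJu : 0 ≤ J u := hJ0 u
    have : Jeps J ε (x - y) * g x ≤ Jeps J ε (x - y) * (M ^ 2 * min ‖u‖ (‖u‖ ^ 2)) := by
      refine mul_le_mul_of_nonneg_left (le_trans hgle hmin) ?_
      exact mul_nonneg (by positivity) hJu
    refine this.trans ?_
    rw [hh, Jeps]
    simp only
    rw [← hu]
    ring_nf
    apply le_of_eq
    ring
  -- measurability of h
  have hmeas : Measurable fun z : En n => ENNReal.ofReal (J z * min ‖z‖ (‖z‖ ^ 2) * M ^ 2) := by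
    apply ENNReal.measurable_ofReal.comp
    exact ((hJm.mul ((measurable_norm).min ((measurable_norm).pow_const 2))).mul_const _)
  -- step 1: bound the set integral
  have step1 : (∫⁻ x in A, ENNReal.ofReal (Jeps J ε (x - y) * g x)) ≤
      ∫⁻ x, ENNReal.ofReal (h x) := by
    refine le_trans (setLIntegral_mono' hA (fun x hx => ENNReal.ofReal_le_ofReal (hpt x hx)))
      (setLIntegral_le_lintegral _ _)
  refine step1.trans ?_
  -- step 2: compute the whole-space integral
  have hεinv : (ε : ℝ)⁻¹ ≠ 0 := inv_ne_zero hε.ne'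
  have step2 : (∫⁻ x, ENNReal.ofReal (h x)) =
      ENNReal.ofReal (1 / ε ^ n) * ENNReal.ofReal (ε ^ n) *
        ∫⁻ z, ENNReal.ofReal (J z * min ‖z‖ (‖z‖ ^ 2) * M ^ 2) := by
    have e1 : (∫⁻ x, ENNReal.ofReal (h x)) = ENNReal.ofReal (1 / ε ^ n) *
        ∫⁻ x, ENNReal.ofReal (J (ε⁻¹ • (x - y)) * min ‖ε⁻¹ • (x - y)‖ (‖ε⁻¹ • (x - y)‖ ^ 2)
          * M ^ 2) := by
      rw [← lintegral_const_mul' _ _ ENNReal.ofReal_ne_top]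
      congr 1 with x
      rw [hh]
      simp only
      rw [ENNReal.ofReal_mul (by positivity)]
    rw [e1]
    have e2 : (∫⁻ x, ENNReal.ofReal (J (ε⁻¹ • (x - y)) * min ‖ε⁻¹ • (x - y)‖
          (‖ε⁻¹ • (x - y)‖ ^ 2) * M ^ 2)) =
        ∫⁻ x, ENNReal.ofReal (J (ε⁻¹ • x) * min ‖ε⁻¹ • x‖ (‖ε⁻¹ • x‖ ^ 2) * M ^ 2) :=
      lintegral_sub_right_eq_self
        (fun x => ENNReal.ofReal (J (ε⁻¹ • x) * min ‖ε⁻¹ • x‖ (‖ε⁻¹ • x‖ ^ 2) * M ^ 2)) y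
    rw [e2]
    have e3 : (∫⁻ x, ENNReal.ofReal (J (ε⁻¹ • x) * min ‖ε⁻¹ • x‖ (‖ε⁻¹ • x‖ ^ 2) * M ^ 2)) =
        ∫⁻ z, ENNReal.ofReal (J z * min ‖z‖ (‖z‖ ^ 2) * M ^ 2)
          ∂(Measure.map (ε⁻¹ • ·) (volume : Measure (En n))) :=
      (lintegral_map hmeas (measurable_const_smul _)).symm
    rw [e3, MeasureTheory.Measure.map_addHaar_smul _ hεinv, lintegral_smul_measure]
    have : |((ε⁻¹ : ℝ) ^ Module.finrank ℝ (En n))⁻¹| = ε ^ n := by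
      rw [finrank_euclideanSpace_fin, ← inv_pow, inv_inv, abs_of_pos hεn]
    rw [this, mul_assoc, smul_eq_mul]
  rw [step2]
  have hconst : ENNReal.ofReal (1 / ε ^ n) * ENNReal.ofReal (ε ^ n) = 1 := by
    rw [← ENNReal.ofReal_mul (by positivity)]
    rw [one_div, inv_mul_cancel₀ hεn.ne']
    exact ENNReal.ofReal_one
  rw [hconst, one_mul]
  -- step 3: the integral of the integrable bound
  have hint : Integrable (fun z : En n => J z * min ‖z‖ (‖z‖ ^ 2) * M ^ 2) :=
    hJ1.mul_const _
  have hnn : 0 ≤ᵐ[volume] fun z : En n => J z * min ‖z‖ (‖z‖ ^ 2) * M ^ 2 := by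
    filter_upwards with z
    have : (0:ℝ) ≤ min ‖z‖ (‖z‖ ^ 2) := le_min (norm_nonneg _) (by positivity)
    exact mul_nonneg (mul_nonneg (hJ0 z) this) (sq_nonneg _)
  rw [← MeasureTheory.ofReal_integral_eq_lintegral_ofReal hint hnn,
    integral_mul_const]
end
end

section
/- Let 0 < ε < δ, let A and B be open sets in ℝⁿ with dist(A, B) ≥ δ, and let u ∈ W^{1,2}_loc(A ∪ B). Then J_ε(u, A, B) := ε ∫_A ∫_B J_ε(x-y)|∇u(x)-∇u(y)|² dx dy ≤ ε ω₁(ε/δ) ∫_{A∪B} |∇u(x)|² dx, where ω₁(t) := 2 ∫_{ℝⁿ \ B_{1/t}(0)} J(z)|z| dz; moreover ω₁(t) → 0 as t → 0⁺. -/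
open MeasureTheory Metric Set Filter Topology Classical
open scoped RealInnerProductSpace NNReal ENNReal

noncomputable section
set_option autoImplicit false
set_option linter.unusedVariables false

variable {n : ℕ}

def Etail (J : En n → ℝ) (R : ℝ) : ℝ≥0∞ :=
  ∫⁻ w in {w : En n | R ≤ ‖w‖}, ENNReal.ofReal (J w * ‖w‖)

lemma measSet (R : ℝ) : MeasurableSet {z : En n | R ≤ ‖z‖} :=
  (isClosed_le continuous_const continuous_norm).measurableSet

lemma Etail_mono (J : En n → ℝ) {R R' : ℝ} (h : R ≤ R') : Etail J R' ≤ Etail J R :=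
  lintegral_mono_set (fun w hw => le_trans h hw)

lemma Etail_le (J : En n → ℝ) (hJ0 : ∀ x, 0 ≤ J x) {R : ℝ} (hR : 1 ≤ R) :
    Etail J R ≤ ∫⁻ x, ENNReal.ofReal (J x * min ‖x‖ (‖x‖ ^ 2)) := by
  have heq : Etail J R = ∫⁻ w in {w : En n | R ≤ ‖w‖}, ENNReal.ofReal (J w * min ‖w‖ (‖w‖ ^ 2)) := by
    refine setLIntegral_congr_fun (measSet R) (fun w hw => ?_)
    have h1 : (1:ℝ) ≤ ‖w‖ := le_trans hR hw
    have hm : min ‖w‖ (‖w‖ ^ 2) = ‖w‖ := by apply min_eq_left; nlinarith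
    rw [hm]
  rw [heq]; exact setLIntegral_le_lintegral _ _

lemma omega1_nonneg (J : En n → ℝ) (hJ0 : ∀ x, 0 ≤ J x) (t : ℝ) : 0 ≤ omega1 J t := by
  have : 0 ≤ ∫ z in {z : En n | 1 / t ≤ ‖z‖}, J z * ‖z‖ :=
    integral_nonneg fun z => mul_nonneg (hJ0 z) (norm_nonneg z)
  unfold omega1; linarith

lemma omega1_eq (J : En n → ℝ) (hJm : Measurable J) (hJ0 : ∀ x, 0 ≤ J x) (t : ℝ)
    (hfin : Etail J (1 / t) ≠ ⊤) :
    ENNReal.ofReal (omega1 J t) = 2 * Etail J (1 / t) := by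
  have h1 : ∫ z in {z : En n | 1 / t ≤ ‖z‖}, J z * ‖z‖ = (Etail J (1 / t)).toReal := by
    rw [Etail, ← integral_eq_lintegral_of_nonneg_ae
      (ae_of_all _ fun z => mul_nonneg (hJ0 z) (norm_nonneg z))
      ((hJm.mul measurable_norm).aestronglyMeasurable)]
  rw [omega1, h1, ENNReal.ofReal_mul (by norm_num), ENNReal.ofReal_toReal hfin,
    ENNReal.ofReal_ofNat]

lemma lint_shift (f : En n → ℝ≥0∞) (hf : Measurable f) (y : En n) {δ : ℝ}
    (T : Set (En n)) (hT : ∀ x ∈ T, δ ≤ ‖x - y‖) :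
    ∫⁻ x in T, f (x - y) ≤ ∫⁻ z in {z : En n | δ ≤ ‖z‖}, f z := by
  have h1 : T ⊆ (· - y) ⁻¹' {z : En n | δ ≤ ‖z‖} := fun x hx => hT x hx
  refine le_trans (lintegral_mono_set h1) (le_of_eq ?_)
  exact (measurePreserving_sub_right volume y).setLIntegral_comp_preimage (measSet δ) hf

lemma rescale (J : En n → ℝ) (hJm : Measurable J) {ε δ : ℝ} (hε : 0 < ε) :
    ∫⁻ z in {z : En n | δ ≤ ‖z‖}, ENNReal.ofReal (Jeps J ε z)
      = ∫⁻ w in {w : En n | δ / ε ≤ ‖w‖}, ENNReal.ofReal (J w) := by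
  have hJem : Measurable fun z : En n => ENNReal.ofReal (Jeps J ε z) :=
    ((hJm.comp (measurable_const_smul ε⁻¹)).const_mul _).ennreal_ofReal
  have hmap : Measure.map (ε • · : En n → En n) volume
      = ENNReal.ofReal |(ε ^ Module.finrank ℝ (En n))⁻¹| • volume :=
    Measure.map_addHaar_smul volume hε.ne'
  have h1 : ∫⁻ z in {z : En n | δ ≤ ‖z‖}, ENNReal.ofReal (Jeps J ε z)
        ∂(Measure.map (ε • · : En n → En n) volume)
      = ∫⁻ w in (ε • · : En n → En n) ⁻¹' {z : En n | δ ≤ ‖z‖},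
          ENNReal.ofReal (Jeps J ε (ε • w)) :=
    setLIntegral_map (measSet δ) hJem (measurable_const_smul ε)
  have hpre : (ε • · : En n → En n) ⁻¹' {z : En n | δ ≤ ‖z‖} = {w : En n | δ / ε ≤ ‖w‖} := by
    ext w
    simp only [mem_preimage, mem_setOf_eq, norm_smul, Real.norm_eq_abs, abs_of_pos hε]
    rw [div_le_iff₀' hε]
  have hcomp : ∀ w : En n, Jeps J ε (ε • w) = (1 / ε ^ n) * J w := by
    intro w
    rw [Jeps, smul_smul, inv_mul_cancel₀ hε.ne', one_smul]
  have hfr : Module.finrank ℝ (En n) = n := finrank_euclideanSpace_fin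
  have habs : ENNReal.ofReal |(ε ^ Module.finrank ℝ (En n))⁻¹| = ENNReal.ofReal (1 / ε ^ n) := by
    rw [hfr, abs_of_pos (by positivity), one_div]
  rw [hmap, Measure.restrict_smul, lintegral_smul_measure, hpre] at h1
  simp only [hcomp] at h1
  have h2 : ∫⁻ w in {w : En n | δ / ε ≤ ‖w‖}, ENNReal.ofReal ((1 / ε ^ n) * J w)
      = ENNReal.ofReal (1 / ε ^ n) * ∫⁻ w in {w : En n | δ / ε ≤ ‖w‖}, ENNReal.ofReal (J w) := by
    simp_rw [ENNReal.ofReal_mul (by positivity : (0:ℝ) ≤ 1 / ε ^ n)]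
    exact lintegral_const_mul' _ _ ENNReal.ofReal_ne_top
  rw [habs, h2] at h1
  have hne : ENNReal.ofReal (1 / ε ^ n) ≠ 0 :=
    (ENNReal.ofReal_pos.mpr (by positivity)).ne'
  exact (ENNReal.mul_right_inj hne ENNReal.ofReal_ne_top).mp h1

lemma omega1_tendsto (J : En n → ℝ) (hJm : Measurable J) (hJ0 : ∀ x, 0 ≤ J x)
    (hJ1 : (∫⁻ x, ENNReal.ofReal (J x * min ‖x‖ (‖x‖ ^ 2))) < ⊤) :
    Tendsto (omega1 J) (𝓝[>] 0) (𝓝 0) := by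
  have hfin : ∀ R : ℝ, 1 ≤ R → Etail J R ≠ ⊤ :=
    fun R hR => ((Etail_le J hJ0 hR).trans_lt hJ1).ne
  -- the sequence of tail integrals tends to 0
  set νm : Measure (En n) := volume.withDensity (fun z => ENNReal.ofReal (J z * ‖z‖)) with hνm
  have hEt : ∀ R : ℝ, Etail J R = νm {w : En n | R ≤ ‖w‖} := fun R =>
    (withDensity_apply _ (measSet R)).symm
  have hseq : Tendsto (fun k : ℕ => Etail J ((k : ℝ) + 1)) atTop (𝓝 0) := by
    have h0 : (⋂ k : ℕ, {w : En n | (k : ℝ) + 1 ≤ ‖w‖}) = ∅ := by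
      ext w
      simp only [mem_iInter, mem_setOf_eq, mem_empty_iff_false, iff_false, not_forall, not_le]
      obtain ⟨k, hk⟩ := exists_nat_gt ‖w‖
      exact ⟨k, by linarith⟩
    have := tendsto_measure_iInter_atTop (μ := νm)
      (s := fun k : ℕ => {w : En n | (k : ℝ) + 1 ≤ ‖w‖})
      (fun k => (measSet _).nullMeasurableSet)
      (fun k l hkl w hw => by
        simp only [mem_setOf_eq] at hw ⊢
        have hc : (k:ℝ) ≤ (l:ℝ) := Nat.cast_le.mpr hkl
        linarith)
      ⟨0, by rw [← hEt]; exact hfin _ (by norm_num)⟩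
    rw [h0] at this
    simp only [measure_empty] at this
    simpa only [hEt, Function.comp_def] using this
  have hseqR : Tendsto (fun k : ℕ => (Etail J ((k : ℝ) + 1)).toReal) atTop (𝓝 0) := by
    have := (ENNReal.tendsto_toReal (by simp : (0:ℝ≥0∞) ≠ ⊤)).comp hseq
    simpa [Function.comp_def] using this
  rw [Metric.tendsto_nhdsWithin_nhds]
  intro η hη
  obtain ⟨k, hk⟩ := (hseqR.eventually (eventually_lt_nhds (show 0 < η/2 by linarith))).exists
  refine ⟨((k : ℝ) + 1)⁻¹, by positivity, fun t ht hdist => ?_⟩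
  have ht0 : 0 < t := ht
  have htlt : t < ((k : ℝ) + 1)⁻¹ := by
    rw [Real.dist_eq, sub_zero, abs_of_pos ht0] at hdist; exact hdist
  have hinv : (k : ℝ) + 1 ≤ 1 / t := by
    rw [le_div_iff₀ ht0]
    calc ((k:ℝ)+1) * t ≤ ((k:ℝ)+1) * ((k:ℝ)+1)⁻¹ := by
          apply mul_le_mul_of_nonneg_left htlt.le (by positivity)
      _ = 1 := by field_simp
  have h1t : (1:ℝ) ≤ 1 / t := le_trans (by norm_num) hinv
  have hfin' : Etail J (1 / t) ≠ ⊤ := hfin _ h1t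
  have homega : ENNReal.ofReal (omega1 J t) = 2 * Etail J (1 / t) :=
    omega1_eq J hJm hJ0 t hfin'
  have hle : omega1 J t ≤ 2 * (Etail J ((k : ℝ) + 1)).toReal := by
    have h2 : ENNReal.ofReal (omega1 J t) ≤ 2 * Etail J ((k : ℝ) + 1) := by
      rw [homega]
      exact mul_le_mul_right (Etail_mono J hinv) 2
    have h3 := ENNReal.toReal_mono
      (ENNReal.mul_ne_top (by norm_num) (hfin _ (by norm_num))) h2
    rwa [ENNReal.toReal_ofReal (omega1_nonneg J hJ0 t), ENNReal.toReal_mul,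
      ENNReal.toReal_ofNat] at h3
  rw [Real.dist_eq, sub_zero, abs_of_nonneg (omega1_nonneg J hJ0 t)]
  linarith

lemma main_estimate (J : En n → ℝ) (hJm : Measurable J) (hJ0 : ∀ x, 0 ≤ J x)
    (hJe : ∀ x, J (-x) = J x)
    (hJ1 : (∫⁻ x, ENNReal.ofReal (J x * min ‖x‖ (‖x‖ ^ 2))) < ⊤)
    (ε δ : ℝ) (hε : 0 < ε) (hεδ : ε < δ)
    (A B : Set (En n)) (hA : IsOpen A) (hB : IsOpen B)
    (hdist : ∀ a ∈ A, ∀ b ∈ B, δ ≤ dist a b) (u : En n → ℝ) :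
    energyJ J ε u A B ≤
      ENNReal.ofReal (ε * omega1 J (ε / δ)) *
        ∫⁻ x in A ∪ B, ENNReal.ofReal (‖fderiv ℝ u x‖ ^ 2) := by
  have hδ : 0 < δ := hε.trans hεδ
  set g : En n → ℝ≥0∞ := fun x => ENNReal.ofReal (‖fderiv ℝ u x‖ ^ 2) with hg
  set q : En n → ℝ≥0∞ := fun z => ENNReal.ofReal (Jeps J ε z) with hq
  set C : ℝ≥0∞ := ∫⁻ z in {z : En n | δ ≤ ‖z‖}, q z with hC
  have hgm : Measurable g :=
    ((measurable_fderiv ℝ u).norm.pow measurable_const).ennreal_ofReal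
  have hqm : Measurable q :=
    ((hJm.comp (measurable_const_smul ε⁻¹)).const_mul _).ennreal_ofReal
  -- evenness of the rescaled kernel
  have hqe : ∀ z : En n, q (-z) = q z := by
    intro z
    simp only [hq, Jeps, smul_neg, hJe]
  -- the key translation bound
  have hKy : ∀ y ∈ A, ∫⁻ x in B, q (x - y) ≤ C := by
    intro y hy
    exact lint_shift q hqm y B (fun x hx => by
      rw [← dist_eq_norm]; exact dist_comm y x ▸ hdist y hy x hx)
  have hKx : ∀ x ∈ B, ∫⁻ y in A, q (x - y) ≤ C := by
    intro x hx
    have : ∀ y : En n, q (x - y) = q (y - x) := fun y => by rw [← neg_sub, hqe]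
    simp_rw [this]
    exact lint_shift q hqm x A (fun a ha => by
      rw [← dist_eq_norm]; exact hdist a ha x hx)
  -- C = tail integral of J, which is at most Etail
  have hCD : C = ∫⁻ w in {w : En n | δ / ε ≤ ‖w‖}, ENNReal.ofReal (J w) :=
    rescale J hJm hε
  have hδε1 : (1:ℝ) ≤ δ / ε := (one_le_div hε).mpr hεδ.le
  have hCE : C ≤ Etail J (δ / ε) := by
    rw [hCD, Etail]
    refine setLIntegral_mono' (measSet _) (fun w hw => ENNReal.ofReal_le_ofReal ?_)
    have h1 : (1:ℝ) ≤ ‖w‖ := le_trans hδε1 hw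
    nlinarith [hJ0 w]
  have hEfin : Etail J (δ / ε) ≠ ⊤ := ((Etail_le J hJ0 hδε1).trans_lt hJ1).ne
  have hCfin : C ≠ ⊤ := (hCE.trans_lt hEfin.lt_top).ne
  -- 2C ≤ ofReal (omega1 J (ε/δ))
  have homega : ENNReal.ofReal (omega1 J (ε / δ)) = 2 * Etail J (δ / ε) := by
    have h1 : 1 / (ε / δ) = δ / ε := by rw [one_div, inv_div]
    rw [omega1_eq J hJm hJ0 (ε / δ) (by rw [h1]; exact hEfin), h1]
  have h2C : 2 * C ≤ ENNReal.ofReal (omega1 J (ε / δ)) := by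
    rw [homega]; exact mul_le_mul_right hCE 2
  -- pointwise bound on the gradient difference
  have hpt : ∀ x y : En n,
      ENNReal.ofReal (‖fderiv ℝ u x - fderiv ℝ u y‖ ^ 2) ≤ 2 * g x + 2 * g y := by
    intro x y
    set a := fderiv ℝ u x; set b := fderiv ℝ u y
    have h1 : ‖a - b‖ ^ 2 ≤ 2 * ‖a‖ ^ 2 + 2 * ‖b‖ ^ 2 := by
      have h2 := norm_sub_le a b
      have h3 : ‖a - b‖ ^ 2 ≤ (‖a‖ + ‖b‖) ^ 2 := by
        nlinarith [norm_nonneg (a - b), norm_nonneg a, norm_nonneg b]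
      nlinarith [sq_nonneg (‖a‖ - ‖b‖)]
    calc ENNReal.ofReal (‖a - b‖ ^ 2)
        ≤ ENNReal.ofReal (2 * ‖a‖ ^ 2 + 2 * ‖b‖ ^ 2) := ENNReal.ofReal_le_ofReal h1
      _ = 2 * g x + 2 * g y := by
          rw [ENNReal.ofReal_add (by positivity) (by positivity),
            ENNReal.ofReal_mul (by norm_num), ENNReal.ofReal_mul (by norm_num),
            ENNReal.ofReal_ofNat]
  -- disjointness
  have hdisj : Disjoint A B := by
    rw [Set.disjoint_left]
    intro x hxA hxB
    have := hdist x hxA x hxB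
    simp only [dist_self] at this
    linarith
  -- the double integral bound
  have hI : (∫⁻ y in A, ∫⁻ x in B, q (x - y) *
        ENNReal.ofReal (‖fderiv ℝ u x - fderiv ℝ u y‖ ^ 2))
      ≤ (2 * C) * ∫⁻ x in A ∪ B, g x := by
    have step1 : (∫⁻ y in A, ∫⁻ x in B, q (x - y) *
          ENNReal.ofReal (‖fderiv ℝ u x - fderiv ℝ u y‖ ^ 2))
        ≤ ∫⁻ y in A, ∫⁻ x in B, (q (x - y) * (2 * g x) + q (x - y) * (2 * g y)) := by
      refine lintegral_mono fun y => lintegral_mono fun x => ?_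
      rw [← mul_add]
      exact mul_le_mul_right (hpt x y) _
    refine step1.trans ?_
    have hmT1 : Measurable fun p : En n × En n => q (p.2 - p.1) * (2 * g p.2) :=
      (hqm.comp (measurable_snd.sub measurable_fst)).mul ((hgm.comp measurable_snd).const_mul 2)
    have step2 : (∫⁻ y in A, ∫⁻ x in B, (q (x - y) * (2 * g x) + q (x - y) * (2 * g y)))
        = (∫⁻ y in A, ∫⁻ x in B, q (x - y) * (2 * g x))
          + ∫⁻ y in A, ∫⁻ x in B, q (x - y) * (2 * g y) := by
      rw [← lintegral_add_left]
      · refine lintegral_congr fun y => ?_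
        rw [← lintegral_add_left]
        exact (hqm.comp (measurable_sub_const y)).mul (hgm.const_mul 2)
      · exact (Measurable.lintegral_prod_right hmT1)
    rw [step2]
    have hT1 : (∫⁻ y in A, ∫⁻ x in B, q (x - y) * (2 * g x)) ≤ C * ∫⁻ x in B, 2 * g x := by
      rw [lintegral_lintegral_swap hmT1.aemeasurable]
      calc (∫⁻ x in B, ∫⁻ y in A, q (x - y) * (2 * g x))
          = ∫⁻ x in B, (∫⁻ y in A, q (x - y)) * (2 * g x) := by
            refine lintegral_congr fun x => ?_
            exact lintegral_mul_const' _ _ (ENNReal.mul_ne_top (by norm_num)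
              ENNReal.ofReal_ne_top)
        _ ≤ ∫⁻ x in B, C * (2 * g x) := by
            refine setLIntegral_mono' hB.measurableSet fun x hx => ?_
            exact mul_le_mul_left (hKx x hx) _
        _ = C * ∫⁻ x in B, 2 * g x := lintegral_const_mul' _ _ hCfin
    have hT2 : (∫⁻ y in A, ∫⁻ x in B, q (x - y) * (2 * g y)) ≤ C * ∫⁻ y in A, 2 * g y := by
      calc (∫⁻ y in A, ∫⁻ x in B, q (x - y) * (2 * g y))
          = ∫⁻ y in A, (∫⁻ x in B, q (x - y)) * (2 * g y) := by
            refine lintegral_congr fun y => ?_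
            exact lintegral_mul_const' _ _ (ENNReal.mul_ne_top (by norm_num)
              ENNReal.ofReal_ne_top)
        _ ≤ ∫⁻ y in A, C * (2 * g y) := by
            refine setLIntegral_mono' hA.measurableSet fun y hy => ?_
            exact mul_le_mul_left (hKy y hy) _
        _ = C * ∫⁻ y in A, 2 * g y := lintegral_const_mul' _ _ hCfin
    calc (∫⁻ y in A, ∫⁻ x in B, q (x - y) * (2 * g x))
          + (∫⁻ y in A, ∫⁻ x in B, q (x - y) * (2 * g y))
        ≤ C * (∫⁻ x in B, 2 * g x) + C * ∫⁻ y in A, 2 * g y := add_le_add hT1 hT2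
      _ = (2 * C) * ((∫⁻ y in A, g y) + ∫⁻ x in B, g x) := by
          rw [lintegral_const_mul' 2 _ (by norm_num), lintegral_const_mul' 2 _ (by norm_num)]
          ring
      _ = (2 * C) * ∫⁻ x in A ∪ B, g x := by
          rw [lintegral_union hB.measurableSet hdisj]
  calc energyJ J ε u A B
      ≤ ENNReal.ofReal ε * ((2 * C) * ∫⁻ x in A ∪ B, g x) := by
        rw [energyJ]
        exact mul_le_mul_right hI _
    _ ≤ ENNReal.ofReal ε * (ENNReal.ofReal (omega1 J (ε / δ)) * ∫⁻ x in A ∪ B, g x) :=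
        mul_le_mul_right (mul_le_mul_left h2C _) _
    _ = ENNReal.ofReal (ε * omega1 J (ε / δ)) * ∫⁻ x in A ∪ B, g x := by
        rw [ENNReal.ofReal_mul hε.le, mul_assoc]

/-- **Lemma 5.4.** Nonlocal interactions between sets at distance at least `δ` are
controlled by `ε ω₁(ε/δ) ∫ |∇u|²`, and `ω₁(t) → 0` as `t → 0⁺`. -/
theorem separated_sets_estimate (n : ℕ)
    (J : En n → ℝ) (hJm : Measurable J) (hJ0 : ∀ x, 0 ≤ J x) (hJe : ∀ x, J (-x) = J x)
    (hJ1 : (∫⁻ x, ENNReal.ofReal (J x * min ‖x‖ (‖x‖ ^ 2))) < ⊤) :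
    (∀ ε δ : ℝ, 0 < ε → ε < δ →
      ∀ A B : Set (En n), IsOpen A → IsOpen B →
        (∀ a ∈ A, ∀ b ∈ B, δ ≤ dist a b) →
        ∀ u : En n → ℝ, MemW12loc u (A ∪ B) →
          energyJ J ε u A B ≤
            ENNReal.ofReal (ε * omega1 J (ε / δ)) *
              ∫⁻ x in A ∪ B, ENNReal.ofReal (‖fderiv ℝ u x‖ ^ 2)) ∧
      Tendsto (omega1 J) (𝓝[>] 0) (𝓝 0) := by
  constructor
  · intro ε δ hε hεδ A B hA hB hdist u hu
    exact main_estimate J hJm hJ0 hJe hJ1 ε δ hε hεδ A B hA hB hdist u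
  · exact omega1_tendsto J hJm hJ0 hJ1
end
end
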